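/- Let G be a finite directed graph and define the p-vector y by y_i = number of incoming directed spanning trees of G rooted at v_i. Then L_2 y = 0, where L_2 = D_out - A_v^T. -/

import Mathlib

open Matrix

variable {p q : ℕ}

/-- In-incidence matrix: `[N_in]_{ki} = 1` iff edge `k` points to vertex `i`. -/
def Nin (tgt : Fin q → Fin p) : Matrix (Fin q) (Fin p) ℝ :=
  Matrix.of fun k i => if tgt k = i then (1 : ℝ) else 0

/-- Out-incidence matrix: `[M_out]_{ik} = 1` iff edge `k` points from vertex `i`. -/
def Mout (src : Fin q → Fin p) : Matrix (Fin p) (Fin q) ℝ :=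
  Matrix.of fun i k => if src k = i then (1 : ℝ) else 0

/-- Diagonal in-degree matrix. -/
def Din (tgt : Fin q → Fin p) : Matrix (Fin p) (Fin p) ℝ :=
  Matrix.diagonal fun i => (Fintype.card {k : Fin q // tgt k = i} : ℝ)

/-- Diagonal out-degree matrix. -/
def Dout (src : Fin q → Fin p) : Matrix (Fin p) (Fin p) ℝ :=
  Matrix.diagonal fun i => (Fintype.card {k : Fin q // src k = i} : ℝ)

/-- Vertex-adjacency matrix: `[A_v]_{ij} = 1` iff there is an edge from `i` to `j`. -/
def Av (src tgt : Fin q → Fin p) : Matrix (Fin p) (Fin p) ℝ :=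
  Matrix.of fun i j => if ∃ k, src k = i ∧ tgt k = j then (1 : ℝ) else 0

/-- `S` is the edge set of an outgoing directed spanning tree rooted at `r`:
every non-root vertex has in-degree `1` in `S`, the root has in-degree `0`,
and there are no directed cycles among the edges of `S`. -/
def IsOutTree (src tgt : Fin q → Fin p) (r : Fin p) (S : Finset (Fin q)) : Prop :=
  (∀ i, i ≠ r → ∃! k, k ∈ S ∧ tgt k = i) ∧
  (∀ k ∈ S, tgt k ≠ r) ∧
  (∀ i, ¬ Relation.TransGen (fun a b => ∃ k ∈ S, src k = a ∧ tgt k = b) i i)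

/-- `S` is the edge set of an incoming directed spanning tree rooted at `r`:
every non-root vertex has out-degree `1` in `S`, the root has out-degree `0`,
and there are no directed cycles among the edges of `S`. -/
def IsInTree (src tgt : Fin q → Fin p) (r : Fin p) (S : Finset (Fin q)) : Prop :=
  (∀ i, i ≠ r → ∃! k, k ∈ S ∧ src k = i) ∧
  (∀ k ∈ S, src k ≠ r) ∧
  (∀ i, ¬ Relation.TransGen (fun a b => ∃ k ∈ S, src k = a ∧ tgt k = b) i i)

/-!
Call an edge set `S` unicyclic through `i` if every vertex has exactly one outgoing edge in `S`
and every vertex reaches `i` along `S`: a spanning in-tree plus one edge closing a cycle through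
`i`. Deleting from `S` the edge that leaves `i` leaves an in-tree rooted at `i`, so there are
`outdeg i * y i` such sets. Deleting instead the edge `k` of the cycle that enters `i` leaves an
in-tree rooted at `src k`, so there are also `∑_{tgt k = i} y (src k)` of them, and without
parallel edges this sum is `(A_vᵀ y)_i`.
-/

open Finset Relation

section Relations

variable {α : Type*} {r r' : α → α → Prop} {a j x y : α}

theorem Relation.ReflTransGen.avoids_or_reaches (h : ReflTransGen r x y) :
    ReflTransGen (fun u v => r u v ∧ u ≠ a) x y ∨ ReflTransGen r x a := by
  induction h with
  | refl => exact Or.inl .refl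
  | @tail y z hxy hyz ih =>
    rcases ih with ih | ih
    · by_cases hy : y = a
      · exact Or.inr (hy ▸ hxy)
      · exact Or.inl (ih.tail ⟨hyz, hy⟩)
    · exact Or.inr ih

/-- An `r'`-cycle through `x` would have to follow the unique `r`-path from `x` to `j` and then
leave `j`. -/
theorem Relation.ReflTransGen.not_transGen_self (hr : Relator.RightUnique r)
    (hsub : ∀ u v, r' u v → r u v ∧ u ≠ j) (h : ReflTransGen r x j) :
    ¬ TransGen r' x x := by
  induction h using ReflTransGen.head_induction_on with
  | refl =>
    intro hc
    obtain ⟨u, hju, -⟩ := TransGen.head'_iff.1 hc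
    exact (hsub _ _ hju).2 rfl
  | @head x w hxw _ ih =>
    intro hc
    obtain ⟨u, hxu, hux⟩ := TransGen.head'_iff.1 hc
    obtain rfl : u = w := hr (hsub _ _ hxu).1 hxw
    exact ih (TransGen.tail' hux hxu)

end Relations

def edgeRel (src tgt : Fin q → Fin p) (S : Finset (Fin q)) (a b : Fin p) : Prop :=
  ∃ k ∈ S, src k = a ∧ tgt k = b

structure IsUnicyclicThrough (src tgt : Fin q → Fin p) (i : Fin p) (S : Finset (Fin q)) :
    Prop where
  existsUnique_src : ∀ v, ∃! k, k ∈ S ∧ src k = v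
  reaches : ∀ v, ReflTransGen (edgeRel src tgt S) v i

section Graph

variable {src tgt : Fin q → Fin p} {i r : Fin p} {k k' : Fin q} {S T T' : Finset (Fin q)}

theorem edgeRel_mono (h : S ⊆ T) : edgeRel src tgt S ≤ edgeRel src tgt T :=
  fun _ _ ⟨k, hk, hs, ht⟩ => ⟨k, h hk, hs, ht⟩

theorem IsUnicyclicThrough.rightUnique (hS : IsUnicyclicThrough src tgt i S) :
    Relator.RightUnique (edgeRel src tgt S) := by
  rintro a _ _ ⟨e, he, rfl, rfl⟩ ⟨e', he', hs, rfl⟩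
  rw [(hS.existsUnique_src _).unique ⟨he, rfl⟩ ⟨he', hs⟩]

namespace IsInTree

theorem notMem_of_src_eq (hT : IsInTree src tgt r T) (hk : src k = r) : k ∉ T :=
  fun hkT => hT.2.1 k hkT hk

theorem reflTransGen_root (hT : IsInTree src tgt r T) (v : Fin p) :
    ReflTransGen (edgeRel src tgt T) v r := by
  have : IsTrans (Fin p) (flip (TransGen (edgeRel src tgt T))) :=
    ⟨fun _ _ _ h₁ h₂ => h₂.trans h₁⟩
  have : Std.Irrefl (flip (TransGen (edgeRel src tgt T))) := ⟨hT.2.2⟩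
  have hwf : WellFounded (flip (TransGen (edgeRel src tgt T))) :=
    Finite.wellFounded_of_trans_of_irrefl _
  refine hwf.induction (C := fun v => ReflTransGen (edgeRel src tgt T) v r) v fun v ih => ?_
  by_cases hv : v = r
  · exact hv ▸ .refl
  · obtain ⟨e, ⟨he, hes⟩, -⟩ := hT.1 v hv
    have hstep : edgeRel src tgt T v (tgt e) := ⟨e, he, hes, rfl⟩
    exact .head hstep (ih _ (.single hstep))

theorem existsUnique_src_insert (hT : IsInTree src tgt (src k) T) (v : Fin p) :
    ∃! e, e ∈ insert k T ∧ src e = v := by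
  by_cases hv : v = src k
  · subst hv
    refine ⟨k, ⟨mem_insert_self k T, rfl⟩, fun e ⟨he, hes⟩ => ?_⟩
    exact (mem_insert.1 he).resolve_right (hT.notMem_of_src_eq hes)
  · obtain ⟨e, ⟨he, hes⟩, huniq⟩ := hT.1 v hv
    refine ⟨e, ⟨mem_insert_of_mem he, hes⟩, fun e' ⟨he', hes'⟩ => ?_⟩
    rcases mem_insert.1 he' with rfl | he'
    · exact absurd hes'.symm hv
    · exact huniq e' ⟨he', hes'⟩

theorem reflTransGen_insert (hT : IsInTree src tgt (src k) T) (v : Fin p) :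
    ReflTransGen (edgeRel src tgt (insert k T)) v (src k) :=
  ReflTransGen.mono (edgeRel_mono (subset_insert k T)) _ _ (hT.reflTransGen_root v)

theorem isUnicyclicThrough_insert_src (hT : IsInTree src tgt (src k) T) :
    IsUnicyclicThrough src tgt (src k) (insert k T) :=
  ⟨hT.existsUnique_src_insert, hT.reflTransGen_insert⟩

theorem isUnicyclicThrough_insert_tgt (hT : IsInTree src tgt (src k) T) :
    IsUnicyclicThrough src tgt (tgt k) (insert k T) :=
  ⟨hT.existsUnique_src_insert, fun v =>
    (hT.reflTransGen_insert v).tail ⟨k, mem_insert_self k T, rfl, rfl⟩⟩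

theorem eq_of_insert_eq (hT : IsInTree src tgt (src k) T) (hT' : IsInTree src tgt (src k) T')
    (h : insert k T = insert k T') : T = T' := by
  rw [← erase_insert (hT.notMem_of_src_eq rfl), h, erase_insert (hT'.notMem_of_src_eq rfl)]

theorem eq_of_insert_eq_of_src_eq (hT : IsInTree src tgt (src k) T) (hs : src k = src k')
    (h : insert k T = insert k' T') : k = k' :=
  ((mem_insert.1 (h ▸ mem_insert_self k' T')).resolve_right
    (hT.notMem_of_src_eq hs.symm)).symm

/-- If `k ≠ k'`, the path from `tgt k` to `src k'` in `T'` either avoids `src k`, and then lies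
in `T` and closes a cycle through `k'` there, or passes `src k`, and then closes a cycle through
`k` in `T'`. -/
theorem eq_of_insert_eq_of_tgt_eq (hT : IsInTree src tgt (src k) T)
    (hT' : IsInTree src tgt (src k') T') (ht : tgt k = tgt k')
    (h : insert k T = insert k' T') : k = k' := by
  by_contra hne
  have hk'T : k' ∈ T := (mem_insert.1 (h ▸ mem_insert_self k' T')).resolve_left (Ne.symm hne)
  have hkT' : k ∈ T' := (mem_insert.1 (h ▸ mem_insert_self k T)).resolve_left hne
  rcases (hT'.reflTransGen_root (tgt k)).avoids_or_reaches (a := src k) with hpath | hpath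
  · refine hT.2.2 (src k') (TransGen.head' ⟨k', hk'T, rfl, ht.symm⟩ ?_)
    refine ReflTransGen.mono
      (fun _ _ ⟨⟨e, he, hes, het⟩, hu⟩ => ⟨e, ?_, hes, het⟩) _ _ hpath
    refine (mem_insert.1 (h ▸ mem_insert_of_mem he : e ∈ insert k T)).resolve_left ?_
    rintro rfl
    exact hu hes.symm
  · exact hT'.2.2 (src k) (TransGen.head' ⟨k, hkT', rfl, rfl⟩ hpath)

end IsInTree

namespace IsUnicyclicThrough

theorem isInTree_erase (hS : IsUnicyclicThrough src tgt i S) (hk : k ∈ S)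
    (hi : ReflTransGen (edgeRel src tgt S) i (src k)) :
    IsInTree src tgt (src k) (S.erase k) := by
  have hroot : ∀ e ∈ S.erase k, src e ≠ src k := fun e he hes =>
    (mem_erase.1 he).1 ((hS.existsUnique_src _).unique ⟨(mem_erase.1 he).2, hes⟩ ⟨hk, rfl⟩)
  refine ⟨fun v hv => ?_, hroot, fun v => ?_⟩
  · obtain ⟨e, ⟨he, hes⟩, huniq⟩ := hS.existsUnique_src v
    refine ⟨e, ⟨mem_erase.2 ⟨?_, he⟩, hes⟩,
      fun e' ⟨he', hes'⟩ => huniq e' ⟨mem_of_mem_erase he', hes'⟩⟩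
    rintro rfl
    exact hv hes.symm
  · refine ((hS.reaches v).trans hi).not_transGen_self hS.rightUnique ?_
    rintro _ _ ⟨e, he, rfl, het⟩
    exact ⟨⟨e, mem_of_mem_erase he, rfl, het⟩, hroot e he⟩

theorem exists_mem_src_eq (hS : IsUnicyclicThrough src tgt i S) : ∃ k ∈ S, src k = i :=
  let ⟨k, ⟨hk, hks⟩, _⟩ := hS.existsUnique_src i
  ⟨k, hk, hks⟩

theorem exists_mem_tgt_eq (hS : IsUnicyclicThrough src tgt i S) :
    ∃ k ∈ S, tgt k = i ∧ ReflTransGen (edgeRel src tgt S) i (src k) := by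
  obtain ⟨k, hk, hks⟩ := hS.exists_mem_src_eq
  have hcycle : TransGen (edgeRel src tgt S) i i :=
    .head' ⟨k, hk, hks, rfl⟩ (hS.reaches (tgt k))
  obtain ⟨_, hi, e, he, rfl, het⟩ := TransGen.tail'_iff.1 hcycle
  exact ⟨e, he, het, hi⟩

end IsUnicyclicThrough

open Classical in
theorem card_isUnicyclicThrough_eq_mul (i : Fin p) :
    #{S | IsUnicyclicThrough src tgt i S} = #{k | src k = i} * #{T | IsInTree src tgt i T} := by
  rw [← card_product]
  refine (card_bij (fun x _ => insert x.1 x.2) ?_ ?_ ?_).symm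
  · simp only [mem_product, mem_filter_univ, and_imp, Prod.forall]
    rintro k T rfl hT
    exact hT.isUnicyclicThrough_insert_src
  · simp only [mem_product, mem_filter_univ, and_imp, Prod.forall, Prod.mk.injEq]
    rintro k T rfl hT k' T' hk' hT' h
    obtain rfl := hT.eq_of_insert_eq_of_src_eq hk'.symm h
    exact ⟨rfl, hT.eq_of_insert_eq hT' h⟩
  · simp only [mem_filter_univ, mem_product, Prod.exists, exists_prop]
    intro S hS
    obtain ⟨k, hk, rfl⟩ := hS.exists_mem_src_eq
    exact ⟨k, S.erase k, ⟨rfl, hS.isInTree_erase hk .refl⟩, insert_erase hk⟩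

open Classical in
theorem card_isUnicyclicThrough_eq_sum (i : Fin p) :
    #{S | IsUnicyclicThrough src tgt i S} =
      ∑ k with tgt k = i, #{T | IsInTree src tgt (src k) T} := by
  rw [← card_sigma]
  refine (card_bij (fun x _ => insert x.1 x.2) ?_ ?_ ?_).symm
  · simp only [mem_sigma, mem_filter_univ, and_imp, Sigma.forall]
    rintro k T rfl hT
    exact hT.isUnicyclicThrough_insert_tgt
  · simp only [mem_sigma, mem_filter_univ, and_imp, Sigma.forall, Sigma.mk.injEq]
    rintro k T rfl hT k' T' hk' hT' h
    obtain rfl := hT.eq_of_insert_eq_of_tgt_eq hT' hk'.symm h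
    exact ⟨rfl, heq_of_eq (hT.eq_of_insert_eq hT' h)⟩
  · simp only [mem_filter_univ, mem_sigma, Sigma.exists, exists_prop]
    intro S hS
    obtain ⟨k, hk, rfl, hi⟩ := hS.exists_mem_tgt_eq
    exact ⟨k, S.erase k, ⟨rfl, hS.isInTree_erase hk hi⟩, insert_erase hk⟩

theorem vecMul_Av_apply (hsimple : Function.Injective fun k => (src k, tgt k))
    (f : Fin p → ℝ) (i : Fin p) : (f ᵥ* Av src tgt) i = ∑ k with tgt k = i, f (src k) := by
  classical
  have hinj : Set.InjOn src {k | tgt k = i} := fun k hk k' hk' h =>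
    hsimple (Prod.ext h (hk.trans hk'.symm))
  rw [← sum_image (by simpa using hinj)]
  simp only [vecMul, dotProduct, Av, of_apply, mul_ite, mul_one, mul_zero, ← sum_filter]
  congr 1
  ext j
  simp [and_comm]

end Graph

theorem laplacian2_mulVec_tree_counts_general (p q : ℕ) (src tgt : Fin q → Fin p)
    (hsimple : Function.Injective fun k => (src k, tgt k)) :
    (Dout src - (Av src tgt)ᵀ) *ᵥ
      (fun i => (Nat.card {S : Finset (Fin q) // IsInTree src tgt i S} : ℝ)) = 0 := by
  classical
  funext i
  have key : #{k | src k = i} * #{T | IsInTree src tgt i T} =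
      ∑ k with tgt k = i, #{T | IsInTree src tgt (src k) T} :=
    (card_isUnicyclicThrough_eq_mul i).symm.trans (card_isUnicyclicThrough_eq_sum i)
  rw [sub_mulVec, mulVec_transpose, Pi.sub_apply, Dout, mulVec_diagonal, vecMul_Av_apply hsimple,
    Pi.zero_apply, sub_eq_zero]
  simp only [Nat.card_eq_fintype_card, Fintype.card_subtype]
  exact_mod_cast key

/-- The vector `y` of numbers of incoming directed spanning trees rooted at each vertex
satisfies `L₂ y = 0`, where `L₂ = D_out - A_vᵀ`. -/
theorem laplacian2_mulVec_tree_counts (p q : ℕ) (src tgt : Fin q → Fin p)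
    (hloop : ∀ k, src k ≠ tgt k)
    (hsimple : Function.Injective fun k => (src k, tgt k)) :
    (Dout src - (Av src tgt)ᵀ) *ᵥ
      (fun i => (Nat.card {S : Finset (Fin q) // IsInTree src tgt i S} : ℝ)) = 0 :=
  laplacian2_mulVec_tree_counts_general p q src tgt hsimple
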